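/- There exist a finite alphabet X and a language L ⊆ X* with L ∈ VA(B × B) such that the Parikh image Ψ(L) is not semilinear, where B is the bicyclic monoid. -/

import Mathlib

/-!
Each factor of `B × B` serves as a counter that may never drop below zero (`x` increments, `x̄`
decrements): an element with a right inverse has nonnegative height, as its action on `ℕ`, with
`x ↦ pred` and `x̄ ↦ succ`, is surjective. The automaton opens blocks with `b`, each incrementing the
first counter, then emits `a` while moving units from the first counter to the second, then moves
units back with `t`; `e` drains the first counter. The two counters together never exceed `#b`, so
an accepted word has `#a ≤ #b²`, while `b^(k+1) (a^k t^k b)^k e^(2k+1)` has `2k + 1` letters `b` and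
`k²` letters `a`. A semilinear set in which one coordinate is bounded by a function of another is
bounded linearly in it, so the Parikh image is not semilinear.
-/

namespace Paper

/-- Defining relation of the bicyclic monoid: the word `x·x̄` is identified with the
empty word. The generator `x` is `FreeMonoid.of 0`, and `x̄` is `FreeMonoid.of 1`. -/
def BicyclicRel : FreeMonoid (Fin 2) → FreeMonoid (Fin 2) → Prop :=
  fun a b => a = FreeMonoid.of 0 * FreeMonoid.of 1 ∧ b = 1

/-- The bicyclic monoid `B`: the quotient of the free monoid on two generators by the
smallest monoid congruence identifying `x·x̄` with the empty word. -/
def Bicyclic : Type := (conGen BicyclicRel).Quotient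

instance : Monoid Bicyclic := inferInstanceAs (Monoid (conGen BicyclicRel).Quotient)

/-- `VA M L`: the language `L ⊆ X*` is accepted by a valence automaton over the monoid `M`,
via the standard characterization: there are a finite alphabet `Y`, a regular language
`R ⊆ Y*`, and monoid homomorphisms `φ : Y* → M`, `h : Y* → X*` with `L = h(R ∩ φ⁻¹(1))`. -/
def VA (M : Type*) [Monoid M] {X : Type} (L : Language X) : Prop :=
  ∃ (Y : Type) (_ : Fintype Y) (R : Language Y)
    (φ : FreeMonoid Y →* M) (h : FreeMonoid Y →* FreeMonoid X),
    R.IsRegular ∧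
      L = (fun w => FreeMonoid.toList (h w)) ''
            {w : FreeMonoid Y | FreeMonoid.toList w ∈ R ∧ φ w = 1}

open Classical in
/-- The Parikh image of a word: the multiset counting occurrences of each letter. -/
noncomputable def parikh {X : Type} (w : List X) : X → ℕ := fun x => w.count x

/-- A linear subset of `X^⊕`. -/
def IsLinearSet {X : Type} (S : Set (X → ℕ)) : Prop :=
  ∃ (α₀ : X → ℕ) (n : ℕ) (α : Fin n → X → ℕ),
    S = {β | ∃ m : Fin n → ℕ, β = α₀ + ∑ i, m i • α i}

/-- A semilinear subset of `X^⊕`: a finite union of linear sets. -/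
def IsSemilinearSet {X : Type} (S : Set (X → ℕ)) : Prop :=
  ∃ (n : ℕ) (T : Fin n → Set (X → ℕ)), (∀ i, IsLinearSet (T i)) ∧ S = ⋃ i, T i

/-- A language is semilinear if its Parikh image is a semilinear set. -/
def LangSemilinear {X : Type} (L : Language X) : Prop := IsSemilinearSet (parikh '' L)

namespace Bicyclic

def x : Bicyclic := (conGen BicyclicRel).mk' (.of 0)

def xbar : Bicyclic := (conGen BicyclicRel).mk' (.of 1)

theorem x_mul_xbar : x * xbar = 1 :=
  (Con.eq _).2 (ConGen.Rel.of _ _ ⟨rfl, rfl⟩)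

theorem x_pow_mul_xbar_pow (n : ℕ) : x ^ n * xbar ^ n = 1 := by
  induction n with
  | zero => simp
  | succ n ih => rw [pow_succ, pow_succ', mul_assoc, ← mul_assoc x, x_mul_xbar, one_mul, ih]

theorem x_pow_add_mul_xbar_pow (m n : ℕ) : x ^ (m + n) * xbar ^ n = x ^ m := by
  rw [pow_add, mul_assoc, x_pow_mul_xbar_pow, mul_one]

@[elab_as_elim]
theorem induction_on {motive : Bicyclic → Prop} (b : Bicyclic) (one : motive 1)
    (x_mul : ∀ b, motive b → motive (x * b)) (xbar_mul : ∀ b, motive b → motive (xbar * b)) :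
    motive b := by
  induction b using Con.induction_on with | H w => ?_
  induction w using FreeMonoid.inductionOn' with
  | one => exact one
  | of_mul i w ih =>
    rw [Con.coe_mul]
    fin_cases i
    exacts [x_mul _ ih, xbar_mul _ ih]

section lift

variable {M : Type*} [Monoid M]

def lift (p q : M) (h : p * q = 1) : Bicyclic →* M :=
  Con.lift _ (FreeMonoid.lift ![p, q]) <| Con.conGen_le.2 fun _ _ ⟨ha, hb⟩ => by
    simp [ha, hb, h]

variable {p q : M} {h : p * q = 1}

@[simp] theorem lift_x : lift p q h x = p := (Con.lift_mk' _ _).trans (by simp)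

@[simp] theorem lift_xbar : lift p q h xbar = q := (Con.lift_mk' _ _).trans (by simp)

end lift

def height : Bicyclic →* Multiplicative ℤ :=
  lift (.ofAdd 1) (.ofAdd (-1)) (by rw [← ofAdd_add, add_neg_cancel, ofAdd_zero])

def toEnd : Bicyclic →* Function.End ℕ := lift (M := Function.End ℕ) Nat.pred Nat.succ rfl

@[simp] theorem height_x : (height x).toAdd = 1 := by simp [height]

@[simp] theorem height_xbar : (height xbar).toAdd = -1 := by simp [height]

theorem toEnd_mul_apply (b c : Bicyclic) (a : ℕ) : toEnd (b * c) a = toEnd b (toEnd c a) :=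
  congrFun (map_mul toEnd b c) a

theorem sub_height_le_toEnd (b : Bicyclic) (a : ℕ) : (a : ℤ) - (height b).toAdd ≤ toEnd b a := by
  induction b using induction_on with
  | one => simp only [map_one, toAdd_one, sub_zero]; rfl
  | x_mul b ih =>
    rw [toEnd_mul_apply, map_mul, toAdd_mul, height_x, show toEnd x = Nat.pred from lift_x,
      Nat.pred_eq_sub_one]
    omega
  | xbar_mul b ih =>
    rw [toEnd_mul_apply, map_mul, toAdd_mul, height_xbar,
      show toEnd xbar = Nat.succ from lift_xbar]
    omega

theorem height_nonneg_of_mul_eq_one {b c : Bicyclic} (h : b * c = 1) : 0 ≤ (height b).toAdd := by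
  have hb : toEnd b (toEnd c 0) = 0 := by rw [← toEnd_mul_apply, h, map_one]; rfl
  have := sub_height_le_toEnd b (toEnd c 0)
  omega

end Bicyclic

section Semilinear

variable {X : Type} {S : Set (X → ℕ)} {i j : X} {f : ℕ → ℕ}

theorem IsLinearSet.exists_linear_bound (hS : IsLinearSet S) (hf : ∀ β ∈ S, β i ≤ f (β j)) :
    ∃ C, ∀ β ∈ S, β i ≤ C * (β j + 1) := by
  obtain ⟨α₀, n, α, rfl⟩ := hS
  -- a period that does not move coordinate `j` would push coordinate `i` above `f (α₀ j)`
  have hflat : ∀ k, α k j = 0 → α k i = 0 := by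
    intro k hk
    have hmem : α₀ + (f (α₀ j) + 1) • α k ∈ {β | ∃ m : Fin n → ℕ, β = α₀ + ∑ l, m l • α l} :=
      ⟨Pi.single k (f (α₀ j) + 1), by
        rw [Fintype.sum_eq_single k fun l hl => by simp [hl]]; simp⟩
    have hle := hf _ hmem
    simp only [Pi.add_apply, Pi.smul_apply, smul_eq_mul, hk, mul_zero, add_zero] at hle
    nlinarith
  set P := ∑ k, α k i
  have hperiod : ∀ k, α k i ≤ P * α k j := by
    intro k
    rcases Nat.eq_zero_or_pos (α k j) with hk | hk
    · simp [hflat k hk]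
    · calc α k i ≤ P :=
            Finset.single_le_sum (f := fun k => α k i) (fun _ _ => Nat.zero_le _) (Finset.mem_univ k)
        _ ≤ P * α k j := Nat.le_mul_of_pos_right P hk
  refine ⟨α₀ i + P, ?_⟩
  rintro _ ⟨m, rfl⟩
  simp only [Pi.add_apply, Finset.sum_apply, Pi.smul_apply, smul_eq_mul]
  have hsum : ∑ k, m k * α k i ≤ P * ∑ k, m k * α k j := by
    rw [Finset.mul_sum]
    refine Finset.sum_le_sum fun k _ => ?_
    calc m k * α k i ≤ m k * (P * α k j) := Nat.mul_le_mul_left _ (hperiod k)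
      _ = P * (m k * α k j) := by ring
  generalize ∑ k, m k * α k j = s at hsum
  nlinarith [Nat.zero_le (α₀ i * (α₀ j + s)), Nat.zero_le (P * (α₀ j + 1))]

theorem IsSemilinearSet.exists_linear_bound (hS : IsSemilinearSet S)
    (hf : ∀ β ∈ S, β i ≤ f (β j)) : ∃ C, ∀ β ∈ S, β i ≤ C * (β j + 1) := by
  obtain ⟨n, T, hT, rfl⟩ := hS
  choose C hC using fun l =>
    (hT l).exists_linear_bound fun β hβ => hf β (Set.mem_iUnion_of_mem l hβ)
  refine ⟨∑ l, C l, fun β hβ => ?_⟩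
  obtain ⟨l, hl⟩ := Set.mem_iUnion.1 hβ
  calc β i ≤ C l * (β j + 1) := hC l β hl
    _ ≤ (∑ l, C l) * (β j + 1) := by
      gcongr
      exact Finset.single_le_sum (fun _ _ => Nat.zero_le _) (Finset.mem_univ l)

end Semilinear

inductive Letter
  | a | b | t | e
  deriving DecidableEq

instance : Fintype Letter := .ofList [.a, .b, .t, .e] fun y => by cases y <;> simp

open Bicyclic in
def valence : Letter → Bicyclic × Bicyclic
  | .b => (x, 1)
  | .a => (xbar, x)
  | .t => (x, xbar)
  | .e => (xbar, 1)

def valenceHom : FreeMonoid Letter →* Bicyclic × Bicyclic := FreeMonoid.lift valence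

def counter₁ (u : List Letter) : ℤ := u.count .b + u.count .t - u.count .a - u.count .e

def counter₂ (u : List Letter) : ℤ := u.count .a - u.count .t

theorem height_valenceHom (u : List Letter) :
    (Bicyclic.height (valenceHom (.ofList u)).1).toAdd = counter₁ u ∧
      (Bicyclic.height (valenceHom (.ofList u)).2).toAdd = counter₂ u := by
  induction u with
  | nil => simp [counter₁, counter₂]
  | cons y u ih =>
    simp only [FreeMonoid.ofList_cons, map_mul, Prod.fst_mul, Prod.snd_mul, toAdd_mul, ih.1, ih.2]
    cases y <;>
      simp only [valenceHom, FreeMonoid.lift_eval_of, valence, Bicyclic.height_x,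
        Bicyclic.height_xbar, map_one, toAdd_one, counter₁, counter₂, List.count_cons, beq_iff_eq,
        reduceCtorEq, ↓reduceIte, Nat.cast_add, Nat.cast_one, add_zero] <;>
      omega

theorem counters_nonneg_of_isPrefix {u w : List Letter} (hw : valenceHom (.ofList w) = 1)
    (hu : u <+: w) : 0 ≤ counter₁ u ∧ 0 ≤ counter₂ u := by
  obtain ⟨v, rfl⟩ := hu
  rw [FreeMonoid.ofList_append, map_mul, Prod.ext_iff] at hw
  rw [← (height_valenceHom u).1, ← (height_valenceHom u).2]
  exact ⟨Bicyclic.height_nonneg_of_mul_eq_one hw.1, Bicyclic.height_nonneg_of_mul_eq_one hw.2⟩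

inductive Phase
  | emit | transfer | dead
  deriving DecidableEq

instance : Fintype Phase := .ofList [.emit, .transfer, .dead] fun p => by cases p <;> simp

def Phase.step : Phase → Letter → Phase
  | .dead, _ => .dead
  | .transfer, .a => .dead
  | _, .b => .emit
  | p, .a => p
  | _, .t => .transfer
  | p, .e => p

def control : DFA Letter Phase := ⟨Phase.step, .transfer, {p | p ≠ .dead}⟩

/-- Under `a`, the quantity `#a + counter₁` is constant while emitting; since
`counter₁ ≤ counter₁ + counter₂ ≤ #b`, opening a block with `b` raises it to at most `(#b + 1)²`. -/
def Phase.Invariant : Phase → List Letter → Prop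
  | .emit, u => u.count .a + counter₁ u ≤ (u.count .b : ℤ) ^ 2
  | .transfer, u => u.count .a ≤ (u.count .b : ℤ) ^ 2
  | .dead, _ => True

theorem invariant_evalFrom {w : List Letter} (hw : valenceHom (.ofList w) = 1) {u : List Letter}
    (hu : u <+: w) : (control.evalFrom .transfer u).Invariant u := by
  induction u using List.reverseRecOn with
  | nil => simp [Phase.Invariant]
  | append_singleton u y ih =>
    have hu' : u <+: w := (List.prefix_append u [y]).trans hu
    obtain ⟨h₁, h₂⟩ := counters_nonneg_of_isPrefix hw hu'
    obtain ⟨h₁', h₂'⟩ := counters_nonneg_of_isPrefix hw hu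
    specialize ih hu'
    rw [DFA.evalFrom_append_singleton]
    generalize control.evalFrom .transfer u = p at ih
    cases p <;> cases y <;>
      simp only [control, Phase.step, Phase.Invariant, counter₁, counter₂, List.count_append,
        List.count_singleton, beq_iff_eq, reduceCtorEq, ↓reduceIte, Nat.cast_add, Nat.cast_one,
        add_zero] at ih h₁ h₂ h₁' h₂' ⊢ <;>
      nlinarith

theorem count_a_le_sq_of_accepts {w : List Letter} (hR : w ∈ control.accepts)
    (hw : valenceHom (.ofList w) = 1) : w.count .a ≤ w.count .b ^ 2 := by
  have hinv := invariant_evalFrom hw (List.prefix_refl w)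
  have hlive : control.evalFrom .transfer w ≠ .dead := hR
  zify
  generalize control.evalFrom .transfer w = p at hinv hlive
  cases p
  · have hemit : (w.count .a : ℤ) + counter₁ w ≤ (w.count .b : ℤ) ^ 2 := hinv
    linarith [(counters_nonneg_of_isPrefix hw (List.prefix_refl w)).1]
  · exact hinv
  · exact absurd rfl hlive

def Letter.isOutput : Letter → Bool
  | .a | .b => true
  | .t | .e => false

def erase : FreeMonoid Letter →* FreeMonoid Letter where
  toFun w := .ofList (w.toList.filter Letter.isOutput)
  map_one' := rfl
  map_mul' _ _ := List.filter_append ..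

theorem count_erase {y : Letter} (hy : y.isOutput) (w : FreeMonoid Letter) :
    (erase w).toList.count y = w.toList.count y :=
  List.count_filter hy

def quadraticLanguage : Language Letter :=
  (fun w => (erase w).toList) '' {w | w.toList ∈ control.accepts ∧ valenceHom w = 1}

theorem quadraticLanguage_mem_VA : VA (Bicyclic × Bicyclic) quadraticLanguage :=
  ⟨Letter, inferInstance, control.accepts, valenceHom, erase, ⟨Phase, inferInstance, control, rfl⟩,
    rfl⟩

theorem parikh_apply {X : Type} [DecidableEq X] (w : List X) (y : X) : parikh w y = w.count y := by
  unfold parikh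
  congr
  exact Subsingleton.elim _ _

theorem parikh_quadraticLanguage_le {β : Letter → ℕ} (hβ : β ∈ parikh '' quadraticLanguage) :
    β .a ≤ β .b ^ 2 := by
  obtain ⟨_, ⟨w, ⟨hR, hw⟩, rfl⟩, rfl⟩ := hβ
  dsimp only
  rw [parikh_apply, parikh_apply, count_erase rfl, count_erase rfl]
  exact count_a_le_sq_of_accepts hR hw

/-- After `b^(k+1)` the first counter holds `k + 1`; each round `a^k t^k b` moves `k` units to the
second counter and back, emitting `k` letters `a` and raising the first counter by one. -/
def witness (k : ℕ) : List Letter :=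
  .replicate (k + 1) .b ++ (List.replicate k (.replicate k .a ++ .replicate k .t ++ [.b])).flatten ++
    .replicate (2 * k + 1) .e

theorem _root_.DFA.evalFrom_flatten_replicate {α σ : Type*} (M : DFA α σ) {s : σ} {x : List α}
    (hx : M.evalFrom s x = s) (n : ℕ) : M.evalFrom s (List.replicate n x).flatten = s :=
  M.evalFrom_of_pow hx <| Language.mem_kstar.2
    ⟨_, rfl, fun y hy => by rw [List.eq_of_mem_replicate hy]; rfl⟩

theorem evalFrom_emit_replicate {y : Letter} (hy : Phase.step .emit y = .emit) (n : ℕ) :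
    control.evalFrom .emit (.replicate n y) = .emit := by
  rw [← List.flatten_replicate_singleton]
  exact control.evalFrom_flatten_replicate ((control.evalFrom_singleton _ _).trans hy) n

theorem witness_mem_accepts (k : ℕ) : witness k ∈ control.accepts := by
  have hround : control.evalFrom .emit (.replicate k .a ++ .replicate k .t ++ [.b]) = .emit := by
    rw [DFA.evalFrom_append_singleton, DFA.evalFrom_of_append, evalFrom_emit_replicate rfl]
    cases k with
    | zero => rfl
    | succ k =>
      show Phase.step (control.evalFrom .transfer (.replicate k .t)) .b = .emit
      rw [← List.flatten_replicate_singleton, control.evalFrom_flatten_replicate rfl]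
      rfl
  show control.evalFrom .transfer (witness k) ≠ .dead
  rw [witness, DFA.evalFrom_of_append, DFA.evalFrom_of_append, List.replicate_succ,
    DFA.evalFrom_cons, show control.step .transfer .b = .emit from rfl,
    evalFrom_emit_replicate rfl, control.evalFrom_flatten_replicate hround,
    evalFrom_emit_replicate rfl]
  nofun

theorem valenceHom_witness (k : ℕ) : valenceHom (.ofList (witness k)) = 1 := by
  open Bicyclic in
  have hrounds : ∀ j, x ^ (k + 1) * (xbar ^ k * (x ^ k * x)) ^ j = x ^ (k + 1 + j) := by
    intro j
    induction j with
    | zero => simp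
    | succ j ih =>
      rw [pow_succ _ j, ← mul_assoc, ih, show k + 1 + j = j + 1 + k by ring, ← mul_assoc,
        x_pow_add_mul_xbar_pow, ← mul_assoc, ← pow_add, ← pow_succ]
      ring_nf
  simp only [valenceHom, witness, List.append_assoc, FreeMonoid.ofList_append,
    FreeMonoid.ofList_flatten, List.map_replicate, FreeMonoid.ofList_cons, FreeMonoid.ofList_nil,
    mul_one, List.prod_replicate, map_mul, FreeMonoid.lift_ofList, valence, Prod.pow_mk, one_pow,
    map_pow, FreeMonoid.lift_eval_of, Prod.mk_mul_mk, one_mul, Prod.ext_iff, Prod.fst_one,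
    Prod.snd_one]
  rw [← mul_assoc, hrounds, show k + 1 + k = 2 * k + 1 by ring]
  simp [x_pow_mul_xbar_pow]

theorem count_witness (k : ℕ) :
    (witness k).count .a = k * k ∧ (witness k).count .b = 2 * k + 1 := by
  simp only [witness, List.count_append, List.count_flatten, List.map_replicate, List.sum_replicate,
    List.count_replicate, List.count_singleton, beq_iff_eq, reduceCtorEq, ↓reduceIte, smul_eq_mul,
    add_zero]
  omega

theorem exists_mem_parikh_quadraticLanguage_gt (C : ℕ) :
    ∃ β ∈ parikh '' quadraticLanguage, C * (β .b + 1) < β .a := by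
  set w : FreeMonoid Letter := .ofList (witness (2 * C + 1))
  refine ⟨_, ⟨_, ⟨w, ⟨witness_mem_accepts _, valenceHom_witness _⟩, rfl⟩, rfl⟩, ?_⟩
  obtain ⟨ha, hb⟩ := count_witness (2 * C + 1)
  rw [parikh_apply, parikh_apply, count_erase rfl, count_erase rfl]
  simp only [w, FreeMonoid.toList_ofList, ha, hb]
  nlinarith

/-- `VA (B × B)` contains a language with non-semilinear Parikh image,
where `B` is the bicyclic monoid. -/
theorem stmt12 :
    ∃ (X : Type) (_ : Fintype X) (L : Language X),
      VA (Bicyclic × Bicyclic) L ∧ ¬ IsSemilinearSet (parikh '' L) := by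
  refine ⟨Letter, inferInstance, quadraticLanguage, quadraticLanguage_mem_VA, fun hS => ?_⟩
  obtain ⟨C, hC⟩ := hS.exists_linear_bound (f := (· ^ 2)) fun _ => parikh_quadraticLanguage_le
  obtain ⟨β, hβ, hlt⟩ := exists_mem_parikh_quadraticLanguage_gt C
  exact (hC β hβ).not_gt hlt

end Paper
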